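/- (Exchange property for I(θ)) Suppose s̲₁⋯s̲ₖ is a reduced S̲-expression for a twisted involution (i.e., ρ(e·s̲₁⋯s̲ₖ) = k), and suppose ρ(e·s̲₁⋯s̲ₖ·s̲) < k for some s ∈ S. Then e·s̲₁⋯s̲ₖ·s̲ = e·s̲₁⋯ŝ̲ᵢ⋯s̲ₖ for some i ∈ {1,…,k}, where the hat denotes omission. -/

import Mathlib

/-- `θ` maps simple reflections to simple reflections. -/
def PreservesSimples {B W : Type*} [Group W] {M : CoxeterMatrix B}
    (cs : CoxeterSystem M W) (θ : W ≃* W) : Prop :=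
  ∀ i : B, ∃ j : B, θ (cs.simple i) = cs.simple j

open Classical in
/-- The twisted action `w · s̲`. -/
noncomputable def twMul {B W : Type*} [Group W] {M : CoxeterMatrix B}
    (cs : CoxeterSystem M W) (θ : W ≃* W) (w : W) (i : B) : W :=
  if θ (cs.simple i) * w * cs.simple i = w then w * cs.simple i
  else θ (cs.simple i) * w * cs.simple i

/-- Action of a word of symbols. -/
noncomputable def twWord {B W : Type*} [Group W] {M : CoxeterMatrix B}
    (cs : CoxeterSystem M W) (θ : W ≃* W) (w : W) (l : List B) : W :=
  l.foldl (twMul cs θ) w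

/-- The rank `ρ(w)`: the minimal length of an `S̲`-expression for `w`. -/
noncomputable def twRho {B W : Type*} [Group W] {M : CoxeterMatrix B}
    (cs : CoxeterSystem M W) (θ : W ≃* W) (w : W) : ℕ :=
  sInf {k : ℕ | ∃ l : List B, l.length = k ∧ twWord cs θ 1 l = w}


/-!
The exchange property is proved together with the subword property for `I(θ)`, by
induction on `k`: if `s̲₁⋯s̲ₖ` is reduced and the twisted involution `v` lies below
`w = e·s̲₁⋯s̲ₖ` in Bruhat order, then `v = e·μ` for a reduced subexpression `μ` of `s̲₁⋯s̲ₖ`.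
For the exchange property, `ℓ(ws) < ℓ(w)` gives `w·s̲ ≤ w`, and the subexpression `μ` for `w·s̲`
has length `k - 1` because `w·s̲ ≠ w` and `(w·s̲)·s̲ = w`: it omits exactly one letter.
The inductive step of the subword property is the lifting property of the twisted action. It
comes from Deodhar's property Z of the Bruhat order, which needs the strong exchange condition;
that one is proved with the sign representation of `W` on `W × ℤˣ`. Finally `ρ(w·s̲) < ρ(w)` forces
`ℓ(ws) < ℓ(w)`, since a length ascent `ℓ(ws) > ℓ(w)` is also a rank ascent.
-/

namespace CoxeterSystem

open List

variable {B W : Type*} [Group W] {M : CoxeterMatrix B} (cs : CoxeterSystem M W)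

local prefix:100 "s" => cs.simple
local prefix:100 "π" => cs.wordProd
local prefix:100 "ℓ" => cs.length
local prefix:100 "ris" => cs.rightInvSeq
local prefix:100 "lis" => cs.leftInvSeq

theorem prod_map_alternatingWord_two_mul {G : Type*} [Monoid G] (f : B → G) (i j : B) (m : ℕ) :
    ((alternatingWord i j (2 * m)).map f).prod = (f i * f j) ^ m := by
  induction m with
  | zero => simp [alternatingWord]
  | succ m ih =>
    rw [show 2 * (m + 1) = 2 * m + 1 + 1 by ring, alternatingWord_succ', alternatingWord_succ']
    simp [ih, pow_succ', mul_assoc, parity_simps]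

theorem wordProd_alternatingWord_two_mul_eq_one (i j : B) :
    π (alternatingWord i j (2 * M i j)) = 1 := by
  rw [wordProd, prod_map_alternatingWord_two_mul, simple_mul_simple_pow]

theorem simple_mul_mul_simple_eq_simple_iff (i : B) (v : W) : s i * v * s i = s i ↔ v = s i := by
  constructor
  · intro h
    simpa [mul_assoc] using congrArg (s i * · * s i) h
  · rintro rfl
    simp

section SignRepresentation

variable [DecidableEq W]

/-- The generator of the sign representation behind the strong exchange condition. It acts on
all of `W`, not only on the reflections, so that no subtype is needed. -/
def signFun (i : B) (p : W × ℤˣ) : W × ℤˣ :=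
  (s i * p.1 * s i, if p.1 = s i then -p.2 else p.2)

theorem signFun_involutive (i : B) : Function.Involutive (cs.signFun i) := by
  rintro ⟨v, ε⟩
  have hconj : s i * (s i * v * s i) * s i = v := by simp [mul_assoc]
  simp only [signFun, simple_mul_mul_simple_eq_simple_iff, hconj]
  split_ifs <;> simp

noncomputable def signPerm (i : B) : Equiv.Perm (W × ℤˣ) :=
  (cs.signFun_involutive i).toPerm

theorem prod_map_signPerm_apply (ω : List B) (v : W) (ε : ℤˣ) :
    (ω.map cs.signPerm).prod (v, ε) =
      (π ω * v * (π ω)⁻¹, ε * (-1) ^ (lis ω).count (π ω * v * (π ω)⁻¹)) := by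
  induction ω with
  | nil => simp
  | cons i ω ih =>
    set x := π ω * v * (π ω)⁻¹
    have hx : π (i :: ω) * v * (π (i :: ω))⁻¹ = MulAut.conj (s i) x := by
      simp [x, wordProd_cons, mul_assoc]
    have hcount : (lis (i :: ω)).count (MulAut.conj (s i) x) =
        (lis ω).count x + if x = s i then 1 else 0 := by
      rw [leftInvSeq, count_cons, count_map_of_injective _ _ (MulAut.conj (s i)).injective]
      simp only [MulAut.conj_apply, inv_simple, beq_iff_eq, eq_comm (a := s i),
        simple_mul_mul_simple_eq_simple_iff]
    rw [List.map_cons, List.prod_cons, Equiv.Perm.mul_apply, ih, hx, hcount]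
    by_cases hxi : x = s i <;>
      simp [signPerm, signFun, hxi, x, pow_succ, MulAut.conj_apply, inv_simple]

theorem even_count_leftInvSeq_alternatingWord (i j : B) (v : W) :
    Even ((lis (alternatingWord i j (2 * M i j))).count v) := by
  -- the left inversion sequence of the braid word is `M i j`-periodic
  set g : ℕ → W := fun k => s i * (s j * s i) ^ k
  have hlis : lis (alternatingWord i j (2 * M i j)) = (range (2 * M i j)).map g := by
    apply List.ext_getElem (by simp)
    intro k hk _
    rw [getElem_leftInvSeq_alternatingWord cs i j _ k (by simpa using hk),
      prod_alternatingWord_eq_mul_pow]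
    simp [g, Nat.add_div, parity_simps]
  have hperiodic : (fun k => g (M i j + k)) = g := by
    funext k
    simp [g, pow_add]
  rw [hlis, two_mul, range_add, map_append, map_map, Function.comp_def, hperiodic, count_append]
  exact ⟨_, rfl⟩

theorem isLiftable_signPerm : M.IsLiftable cs.signPerm := by
  intro i j
  ext ⟨v, ε⟩ : 1
  rw [← prod_map_alternatingWord_two_mul, prod_map_signPerm_apply,
    wordProd_alternatingWord_two_mul_eq_one]
  obtain ⟨n, hn⟩ := even_count_leftInvSeq_alternatingWord cs i j v
  simp [hn, ← two_mul, pow_mul]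

noncomputable def signRep : W →* Equiv.Perm (W × ℤˣ) :=
  cs.lift ⟨cs.signPerm, cs.isLiftable_signPerm⟩

theorem signRep_wordProd_apply (ω : List B) (v : W) (ε : ℤˣ) :
    cs.signRep (π ω) (v, ε) =
      (π ω * v * (π ω)⁻¹, ε * (-1) ^ (lis ω).count (π ω * v * (π ω)⁻¹)) := by
  rw [← prod_map_signPerm_apply, signRep, wordProd, map_list_prod, map_map]
  simp only [Function.comp_def, lift_apply_simple]

theorem signRep_apply_fst (g v : W) (ε : ℤˣ) : (cs.signRep g (v, ε)).1 = g * v * g⁻¹ := by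
  obtain ⟨ω, rfl⟩ := cs.wordProd_surjective g
  simp [signRep_wordProd_apply]

theorem signRep_apply_neg (g v : W) (ε : ℤˣ) :
    cs.signRep g (v, -ε) = ((cs.signRep g (v, ε)).1, -(cs.signRep g (v, ε)).2) := by
  obtain ⟨ω, rfl⟩ := cs.wordProd_surjective g
  simp [signRep_wordProd_apply]

/-- Conjugate `t` to a simple reflection, whose `signPerm` flips the sign. -/
theorem signRep_apply_self {t : W} (ht : cs.IsReflection t) : cs.signRep t (t, 1) = (t, -1) := by
  obtain ⟨w, i, rfl⟩ := ht
  set p := cs.signRep w⁻¹ (w * s i * w⁻¹, 1)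
  have hp : p = (s i, p.2) := Prod.ext (by simp only [p, signRep_apply_fst]; group) rfl
  have hsimple : cs.signRep (s i) p = (s i, -p.2) := by
    rw [hp, signRep, lift_apply_simple]
    simp [signPerm, signFun]
  have hback : cs.signRep w p = (w * s i * w⁻¹, 1) := by
    rw [← Equiv.Perm.mul_apply, ← map_mul, mul_inv_cancel, map_one, Equiv.Perm.one_apply]
  calc cs.signRep (w * s i * w⁻¹) (w * s i * w⁻¹, 1) = cs.signRep w (cs.signRep (s i) p) := by
        simp [p, map_mul]
    _ = (w * s i * w⁻¹, -1) := by
        rw [hsimple, signRep_apply_neg, ← hp, hback]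

theorem even_count_leftInvSeq_iff {ω ω' : List B} (h : π ω = π ω') (t : W) :
    Even ((lis ω).count t) ↔ Even ((lis ω').count t) := by
  have hsign (ω : List B) :
      (cs.signRep (π ω) ((π ω)⁻¹ * t * π ω, 1)).2 = (-1) ^ (lis ω).count t := by
    simp [signRep_wordProd_apply, mul_assoc]
  rw [← neg_one_pow_eq_one_iff_even (R := ℤˣ) (by decide), ← hsign, h, hsign,
    neg_one_pow_eq_one_iff_even (by decide)]

theorem odd_count_leftInvSeq_of_wordProd_eq {ω : List B} {t : W} (ht : cs.IsReflection t)
    (h : π ω = t) : Odd ((lis ω).count t) := by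
  subst h
  have hself := cs.signRep_apply_self ht
  rw [signRep_wordProd_apply] at hself
  simpa [neg_one_pow_eq_neg_one_iff_odd (R := ℤˣ) (by decide)] using congrArg Prod.snd hself

end SignRepresentation

theorem leftInvSeq_append (α β : List B) :
    lis (α ++ β) = lis α ++ (lis β).map (MulAut.conj (π α)) := by
  induction α with
  | nil => simp
  | cons i α ih => simp [leftInvSeq, ih, wordProd_cons, map_map, Function.comp_def]

/-- With `π τ = t` and `ω₁` reduced for `t * π ω`, the word `τ ++ ω₁` for `π ω` has `t` an odd
number of times in its left inversion sequence, and this parity only depends on `π ω`. -/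
theorem mem_leftInvSeq_of_isLeftInversion {ω : List B} {t : W}
    (ht : cs.IsLeftInversion (π ω) t) : t ∈ lis ω := by
  classical
  obtain ⟨ω₁, hω₁, hω₁t⟩ := cs.exists_isReduced (t * π ω)
  obtain ⟨τ, hτ⟩ := cs.wordProd_surjective t
  have hprod : π (τ ++ ω₁) = π ω := by
    rw [wordProd_append, hτ, ← hω₁t, ← mul_assoc, ht.1.mul_self, one_mul]
  have hnotMem : t ∉ lis ω₁ := fun hmem => by
    have hlt := (cs.isLeftInversion_of_mem_leftInvSeq hω₁ hmem).2
    rw [← hω₁t, ← mul_assoc, ht.1.mul_self, one_mul] at hlt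
    exact absurd ht.2 (by omega)
  have hfix : MulAut.conj (π τ) t = t := by simp [hτ]
  have hodd : Odd ((lis (τ ++ ω₁)).count t) := by
    rw [leftInvSeq_append, count_append, ← hfix,
      count_map_of_injective _ _ (MulAut.conj (π τ)).injective, hfix, count_eq_zero.2 hnotMem]
    exact cs.odd_count_leftInvSeq_of_wordProd_eq ht.1 hτ
  rw [← Nat.not_even_iff_odd, cs.even_count_leftInvSeq_iff hprod, Nat.not_even_iff_odd] at hodd
  exact count_pos_iff.1 hodd.pos

theorem mem_rightInvSeq_of_isRightInversion {ω : List B} {t : W}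
    (ht : cs.IsRightInversion (π ω) t) : t ∈ ris ω := by
  rw [← inv_inv (π ω), isRightInversion_inv_iff, ← wordProd_reverse] at ht
  simpa [leftInvSeq_reverse] using cs.mem_leftInvSeq_of_isLeftInversion ht

theorem exists_eraseIdx_of_isLeftInversion {ω : List B} {t : W}
    (ht : cs.IsLeftInversion (π ω) t) : ∃ j < ω.length, t * π ω = π (ω.eraseIdx j) := by
  obtain ⟨j, hj, rfl⟩ := mem_iff_getElem.1 (cs.mem_leftInvSeq_of_isLeftInversion ht)
  refine ⟨j, by simpa using hj, ?_⟩
  rw [← getD_leftInvSeq_mul_wordProd, getD_eq_getElem]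

theorem exists_eraseIdx_of_isRightInversion {ω : List B} {t : W}
    (ht : cs.IsRightInversion (π ω) t) : ∃ j < ω.length, π ω * t = π (ω.eraseIdx j) := by
  obtain ⟨j, hj, rfl⟩ := mem_iff_getElem.1 (cs.mem_rightInvSeq_of_isRightInversion ht)
  refine ⟨j, by simpa using hj, ?_⟩
  rw [← wordProd_mul_getD_rightInvSeq, getD_eq_getElem]

theorem wordProd_eraseIdx_append_singleton (ω : List B) (i : B) {j : ℕ} (hj : j < ω.length + 1) :
    (j = ω.length ∧ π ((ω ++ [i]).eraseIdx j) = π ω) ∨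
      (j < ω.length ∧ π ((ω ++ [i]).eraseIdx j) = π (ω.eraseIdx j) * s i) := by
  rcases Nat.lt_succ_iff_lt_or_eq.1 hj with hj | rfl
  · exact Or.inr ⟨hj, by rw [eraseIdx_append_of_lt_length hj, wordProd_append, wordProd_singleton]⟩
  · exact Or.inl ⟨rfl, by rw [eraseIdx_append_of_length_le le_rfl]; simp⟩

theorem length_wordProd_eraseIdx_lt {ω : List B} (hω : cs.IsReduced ω) {j : ℕ} (hj : j < ω.length) :
    ℓ (π (ω.eraseIdx j)) < ℓ (π ω) := by
  have := cs.length_wordProd_le (ω.eraseIdx j)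
  have := length_eraseIdx_add_one hj
  rw [hω.eq]
  omega

theorem eq_or_length_mul_mul_simple_add_two_le {y t : W} {i : B} (ht : cs.IsLeftInversion y t)
    (hi : ℓ (y * s i) < ℓ y) : t * y = y * s i ∨ ℓ (t * y * s i) + 2 ≤ ℓ y := by
  obtain ⟨ω, hω, hωy⟩ := cs.exists_isReduced (y * s i)
  have hy : π (ω ++ [i]) = y := by simp [wordProd_append, ← hωy]
  have hlen : ℓ y = ω.length + 1 := by
    have := cs.length_mul_simple y i
    have : ℓ (y * s i) = ω.length := by rw [hωy, hω.eq]
    omega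
  rw [← hy] at ht
  obtain ⟨j, hj, hty⟩ := cs.exists_eraseIdx_of_isLeftInversion ht
  rw [hy] at hty
  rcases cs.wordProd_eraseIdx_append_singleton ω i (by simpa using hj) with ⟨-, h⟩ | ⟨hj, h⟩
  · exact Or.inl (by rw [hty, h, hωy])
  · right
    rw [hty, h, simple_mul_simple_cancel_right, hlen]
    have := cs.length_wordProd_eraseIdx_lt hω hj
    rw [hω.eq] at this
    omega

section Bruhat

def BruhatLE : W → W → Prop :=
  Relation.ReflTransGen fun x y => ∃ t, cs.IsReflection t ∧ y = x * t ∧ ℓ x < ℓ y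

local infix:50 " ≤ᵇ " => cs.BruhatLE

variable {cs}

@[refl]
theorem BruhatLE.refl (x : W) : x ≤ᵇ x := Relation.ReflTransGen.refl

theorem BruhatLE.trans {x y z : W} (hxy : x ≤ᵇ y) (hyz : y ≤ᵇ z) : x ≤ᵇ z :=
  Relation.ReflTransGen.trans hxy hyz

theorem BruhatLE.length_le {x y : W} (h : x ≤ᵇ y) : ℓ x ≤ ℓ y := by
  induction h with
  | refl => rfl
  | tail _ hstep ih =>
    obtain ⟨t, -, -, hlt⟩ := hstep
    omega

theorem BruhatLE.inv {x y : W} (h : x ≤ᵇ y) : x⁻¹ ≤ᵇ y⁻¹ := by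
  induction h with
  | refl => rfl
  | @tail y z _ hstep ih =>
    obtain ⟨t, ht, rfl, hlt⟩ := hstep
    refine ih.trans (Relation.ReflTransGen.single ⟨y * t * y⁻¹, ht.conj y, ?_, ?_⟩)
    · rw [mul_inv_rev, ht.inv]
      group
    · rwa [length_inv, length_inv]

variable (cs)

theorem bruhatLE_mul_reflection {x t : W} (ht : cs.IsReflection t) (h : ℓ x < ℓ (x * t)) :
    x ≤ᵇ x * t :=
  Relation.ReflTransGen.single ⟨t, ht, rfl, h⟩

theorem mul_reflection_bruhatLE {x t : W} (ht : cs.IsReflection t) (h : ℓ (x * t) < ℓ x) :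
    x * t ≤ᵇ x :=
  Relation.ReflTransGen.single ⟨t, ht, by rw [mul_assoc, ht.mul_self, mul_one], h⟩

theorem reflection_mul_bruhatLE {x t : W} (ht : cs.IsReflection t) (h : ℓ (t * x) < ℓ x) :
    t * x ≤ᵇ x := by
  have hconj : t * x = x * (x⁻¹ * t * x) := by group
  rw [hconj] at h ⊢
  exact cs.mul_reflection_bruhatLE (by simpa using ht.conj x⁻¹) h

theorem mul_simple_bruhatLE {x : W} {i : B} (h : ℓ (x * s i) < ℓ x) : x * s i ≤ᵇ x :=
  cs.mul_reflection_bruhatLE (cs.isReflection_simple i) h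

theorem bruhatLE_mul_simple {x : W} {i : B} (h : ℓ x < ℓ (x * s i)) : x ≤ᵇ x * s i :=
  cs.bruhatLE_mul_reflection (cs.isReflection_simple i) h

theorem wordProd_eraseIdx_bruhatLE {ω : List B} (hω : cs.IsReduced ω) {j : ℕ}
    (hj : j < ω.length) : π (ω.eraseIdx j) ≤ᵇ π ω := by
  have hmem : (ris ω).getD j 1 ∈ ris ω := by
    rw [getD_eq_getElem _ _ (by simpa using hj)]
    exact getElem_mem _
  rw [← wordProd_mul_getD_rightInvSeq]
  refine cs.mul_reflection_bruhatLE (cs.isReflection_of_mem_rightInvSeq ω hmem) ?_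
  rw [wordProd_mul_getD_rightInvSeq]
  exact cs.length_wordProd_eraseIdx_lt hω (by simpa using hj)

theorem bruhatLE_mul_reflection_mul_simple {x t : W} {i : B} (ht : cs.IsReflection t)
    (hxt : ℓ x < ℓ (x * t)) (hxi : ℓ x < ℓ (x * s i)) :
    x ≤ᵇ x * t * s i := by
  obtain ⟨ω, hω, hωw⟩ := cs.exists_isReduced (x * t * s i)
  have hw : π (ω ++ [i]) = x * t := by simp [wordProd_append, ← hωw]
  have hinv : cs.IsRightInversion (π (ω ++ [i])) t :=
    ⟨ht, by rwa [hw, mul_assoc, ht.mul_self, mul_one]⟩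
  obtain ⟨j, hj, hx⟩ := cs.exists_eraseIdx_of_isRightInversion hinv
  rw [hw, mul_assoc, ht.mul_self, mul_one] at hx
  rcases cs.wordProd_eraseIdx_append_singleton ω i (by simpa using hj) with ⟨-, h⟩ | ⟨hj, h⟩
  · rw [hωw, hx, h]
  · have hxy : x * s i = π (ω.eraseIdx j) := by rw [hx, h, simple_mul_simple_cancel_right]
    rw [hωw]
    exact (cs.bruhatLE_mul_simple hxi).trans (hxy ▸ cs.wordProd_eraseIdx_bruhatLE hω hj)

/-- Deodhar's property Z at `w`, together with its analogue for ascents. -/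
def LiftingAt (w : W) : Prop :=
  ∀ v, v ≤ᵇ w → ∀ i : B,
    (ℓ (w * s i) < ℓ w → v * s i ≤ᵇ w ∧ (v ≤ᵇ w * s i ∨ v * s i ≤ᵇ w * s i)) ∧
    (ℓ w < ℓ (w * s i) → v * s i ≤ᵇ w * s i)

theorem liftingAt_of_forall_length_lt {w : W} (ih : ∀ x, ℓ x < ℓ w → cs.LiftingAt x) :
    cs.LiftingAt w := by
  intro v hvw i
  -- split off the last step `x < x * t = w` of a chain from `v` to `w`
  rcases Relation.ReflTransGen.cases_tail hvw with rfl | ⟨x, hvx, t, ht, rfl, hxt⟩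
  · exact ⟨fun h => ⟨cs.mul_simple_bruhatLE h, Or.inr (.refl _)⟩, fun _ => .refl _⟩
  have hxw : x ≤ᵇ x * t := cs.bruhatLE_mul_reflection ht hxt
  have hxs (h : ℓ (x * s i) < ℓ (x * t * s i)) : x * s i ≤ᵇ x * t * s i := by
    have hconj : x * s i = x * t * s i * (s i * t * s i) := by
      calc x * s i = x * (t * t) * s i := by rw [ht.mul_self, mul_one]
        _ = _ := by simp [mul_assoc, simple_mul_simple_cancel_left]
    rw [hconj] at h ⊢
    exact cs.mul_reflection_bruhatLE (by simpa using ht.conj (s i)) h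
  obtain ⟨hdown, hup⟩ := ih x hxt v hvx i
  have := cs.length_mul_simple (x * t) i
  rcases cs.length_mul_simple x i with hx | hx
  · have hvxs := hup (by omega)
    refine ⟨fun hw => ?_, fun hw => hvxs.trans (hxs (by omega))⟩
    have hxws := cs.bruhatLE_mul_reflection_mul_simple ht hxt (i := i) (by omega)
    have hxsw : x * s i ≤ᵇ x * t := by
      simpa [simple_mul_simple_cancel_right] using
        (ih _ hw x hxws i).2 (by rwa [simple_mul_simple_cancel_right])
    exact ⟨hvxs.trans hxsw, Or.inl (hvx.trans hxws)⟩
  · obtain ⟨hvsx, hor⟩ := hdown (by omega)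
    have hxsw := hxs (by omega)
    exact ⟨fun _ => ⟨hvsx.trans hxw, hor.imp (·.trans hxsw) (·.trans hxsw)⟩,
      fun hw => hvsx.trans (hxw.trans (cs.bruhatLE_mul_simple hw))⟩

theorem liftingAt (w : W) : cs.LiftingAt w := by
  induction hn : ℓ w using Nat.strong_induction_on generalizing w with
  | _ n ih => exact cs.liftingAt_of_forall_length_lt fun x hx => ih _ (hn ▸ hx) x rfl

variable {cs}

theorem BruhatLE.lift_right {v w : W} (hvw : v ≤ᵇ w) {i : B} (hw : ℓ (w * s i) < ℓ w) :
    v ≤ᵇ w * s i ∨ (ℓ (v * s i) < ℓ v ∧ v * s i ≤ᵇ w * s i) := by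
  obtain ⟨-, h | h⟩ := (cs.liftingAt w v hvw i).1 hw
  · exact Or.inl h
  · rcases cs.length_mul_simple v i with hv | hv
    · exact Or.inl ((cs.bruhatLE_mul_simple (by omega)).trans h)
    · exact Or.inr ⟨by omega, h⟩

theorem BruhatLE.lift_left {v w : W} (hvw : v ≤ᵇ w) {i : B} (hw : ℓ (s i * w) < ℓ w) :
    v ≤ᵇ s i * w ∨ (ℓ (s i * v) < ℓ v ∧ s i * v ≤ᵇ s i * w) := by
  have hinv (x : W) : x⁻¹ * s i = (s i * x)⁻¹ := by rw [mul_inv_rev, inv_simple]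
  have hw' : ℓ (w⁻¹ * s i) < ℓ w⁻¹ := by rwa [hinv, length_inv, length_inv]
  rcases hvw.inv.lift_right hw' with h | ⟨hlt, h⟩
  · rw [hinv] at h
    exact Or.inl (by simpa using h.inv)
  · rw [hinv, hinv] at h
    rw [hinv, length_inv, length_inv] at hlt
    exact Or.inr ⟨hlt, by simpa using h.inv⟩

end Bruhat

end CoxeterSystem

section TwistedInvolutions

open CoxeterSystem

variable {B W : Type*} [Group W] {M : CoxeterMatrix B} (cs : CoxeterSystem M W) (θ : W ≃* W)

local prefix:100 "s" => cs.simple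
local prefix:100 "π" => cs.wordProd
local prefix:100 "ℓ" => cs.length
local infix:50 " ≤ᵇ " => cs.BruhatLE

theorem theta_simple_mul_self (i : B) : θ (s i) * θ (s i) = 1 := by
  rw [← map_mul, simple_mul_simple_self, map_one]

theorem length_theta (hinv : ∀ w : W, θ (θ w) = w) (hS : PreservesSimples cs θ) (w : W) :
    ℓ (θ w) = ℓ w := by
  choose f hf using hS
  have hle (w : W) : ℓ (θ w) ≤ ℓ w := by
    obtain ⟨ω, hω, rfl⟩ := cs.exists_isReduced w
    have hθ : θ (π ω) = π (ω.map f) := by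
      simp [wordProd, map_list_prod, List.map_map, Function.comp_def, hf]
    rw [hθ, hω.eq]
    simpa using cs.length_wordProd_le (ω.map f)
  exact le_antisymm (hle w) (by simpa [hinv] using hle (θ w))

theorem length_theta_simple_mul (hinv : ∀ w : W, θ (θ w) = w) (hS : PreservesSimples cs θ)
    {w : W} (hw : θ w = w⁻¹) (i : B) : ℓ (θ (s i) * w) = ℓ (w * s i) := by
  rw [← length_theta cs θ hinv hS, map_mul, hinv, hw, ← inv_simple, ← mul_inv_rev, length_inv,
    inv_simple]

variable {cs θ}

theorem twMul_of_eq {w : W} {i : B} (h : θ (s i) * w * s i = w) : twMul cs θ w i = w * s i :=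
  if_pos h

theorem twMul_of_ne {w : W} {i : B} (h : θ (s i) * w * s i ≠ w) :
    twMul cs θ w i = θ (s i) * w * s i :=
  if_neg h

variable (cs θ)

theorem twMul_twMul (w : W) (i : B) : twMul cs θ (twMul cs θ w i) i = w := by
  have hcancel : θ (s i) * (θ (s i) * w * s i) * s i = w := by
    calc _ = θ (s i) * θ (s i) * w * (s i * s i) := by group
      _ = w := by rw [theta_simple_mul_self, simple_mul_simple_self, one_mul, mul_one]
  by_cases h : θ (s i) * w * s i = w
  · have h' : θ (s i) * (w * s i) * s i = w * s i := by
      conv_rhs => rw [← h]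
      simp [mul_assoc, simple_mul_simple_self]
    rw [twMul_of_eq h, twMul_of_eq h', simple_mul_simple_cancel_right]
  · have h' : θ (s i) * (θ (s i) * w * s i) * s i ≠ θ (s i) * w * s i := by
      rw [hcancel]
      exact Ne.symm h
    rw [twMul_of_ne h, twMul_of_ne h', hcancel]

theorem twMul_ne (w : W) (i : B) : twMul cs θ w i ≠ w := by
  by_cases h : θ (s i) * w * s i = w
  · rw [twMul_of_eq h]
    exact fun h' => cs.length_mul_simple_ne w i (congrArg cs.length h')
  · rwa [twMul_of_ne h]

theorem theta_twMul (hinv : ∀ w : W, θ (θ w) = w) {w : W} (hw : θ w = w⁻¹) (i : B) :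
    θ (twMul cs θ w i) = (twMul cs θ w i)⁻¹ := by
  by_cases h : θ (s i) * w * s i = w
  · have hθs : θ (s i) = w * s i * w⁻¹ := by
      calc θ (s i) = θ (s i) * w * s i * (s i * w⁻¹) := by
            rw [mul_assoc (θ (s i) * w), simple_mul_simple_cancel_left, mul_inv_cancel_right]
        _ = w * s i * w⁻¹ := by rw [h, mul_assoc]
    rw [twMul_of_eq h, map_mul, hw, hθs, mul_inv_rev, inv_simple]
    group
  · rw [twMul_of_ne h, map_mul, map_mul, hinv, hw, mul_inv_rev, mul_inv_rev, inv_simple,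
      ← map_inv, inv_simple, mul_assoc]

theorem length_theta_simple_mul_mul_simple_add_two (hinv : ∀ w : W, θ (θ w) = w)
    (hS : PreservesSimples cs θ) {w : W} (hw : θ w = w⁻¹) {i : B} (hi : ℓ (w * s i) < ℓ w)
    (hne : θ (s i) * w * s i ≠ w) : ℓ (θ (s i) * w * s i) + 2 = ℓ w := by
  obtain ⟨a, ha⟩ := hS i
  have hleft := length_theta_simple_mul cs θ hinv hS hw i
  have hdesc : cs.IsLeftInversion w (θ (s i)) := ⟨ha ▸ cs.isReflection_simple a, by omega⟩
  rcases cs.eq_or_length_mul_mul_simple_add_two_le hdesc hi with h | h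
  · exact absurd (by rw [h, simple_mul_simple_cancel_right]) hne
  · have := cs.length_mul_simple (θ (s i) * w) i
    have := cs.length_mul_simple w i
    omega

theorem length_theta_simple_mul_mul_simple_eq_add_two (hinv : ∀ w : W, θ (θ w) = w)
    (hS : PreservesSimples cs θ) {w : W} (hw : θ w = w⁻¹) {i : B} (hi : ℓ w < ℓ (w * s i))
    (hne : θ (s i) * w * s i ≠ w) : ℓ (θ (s i) * w * s i) = ℓ w + 2 := by
  obtain ⟨a, ha⟩ := hS i
  have hleft := length_theta_simple_mul cs θ hinv hS hw i
  have := cs.length_mul_simple (θ (s i) * w) i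
  have := cs.length_mul_simple w i
  by_contra hlen
  have hdesc : cs.IsLeftInversion (w * s i) (θ (s i)) :=
    ⟨ha ▸ cs.isReflection_simple a, by rw [← mul_assoc]; omega⟩
  have hi' : ℓ (w * s i * s i) < ℓ (w * s i) := by rw [simple_mul_simple_cancel_right]; omega
  rcases cs.eq_or_length_mul_mul_simple_add_two_le hdesc hi' with h | h
  · exact hne (by rw [mul_assoc, h, simple_mul_simple_cancel_right])
  · rw [← mul_assoc, simple_mul_simple_cancel_right] at h
    omega

theorem length_twMul_mul_simple_lt (hinv : ∀ w : W, θ (θ w) = w) (hS : PreservesSimples cs θ)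
    {w : W} (hw : θ w = w⁻¹) {i : B} (hi : ℓ w < ℓ (w * s i)) :
    ℓ (twMul cs θ w i * s i) < ℓ (twMul cs θ w i) := by
  by_cases h : θ (s i) * w * s i = w
  · rwa [twMul_of_eq h, simple_mul_simple_cancel_right]
  · rw [twMul_of_ne h, simple_mul_simple_cancel_right, length_theta_simple_mul cs θ hinv hS hw,
      length_theta_simple_mul_mul_simple_eq_add_two cs θ hinv hS hw hi h]
    have := cs.length_mul_simple w i
    omega

theorem twMul_bruhatLE_mul_simple (hinv : ∀ w : W, θ (θ w) = w) (hS : PreservesSimples cs θ)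
    {v : W} (hv : θ v = v⁻¹) {i : B} (hi : ℓ (v * s i) < ℓ v) : twMul cs θ v i ≤ᵇ v * s i := by
  by_cases h : θ (s i) * v * s i = v
  · rw [twMul_of_eq h]
  · obtain ⟨a, ha⟩ := hS i
    have := length_theta_simple_mul_mul_simple_add_two cs θ hinv hS hv hi h
    have := cs.length_mul_simple v i
    rw [twMul_of_ne h, mul_assoc]
    exact cs.reflection_mul_bruhatLE (ha ▸ cs.isReflection_simple a) (by rw [← mul_assoc]; omega)

theorem twMul_bruhatLE_theta_simple_mul (hinv : ∀ w : W, θ (θ w) = w)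
    (hS : PreservesSimples cs θ) {v : W} (hv : θ v = v⁻¹) {i : B} (hi : ℓ (v * s i) < ℓ v) :
    twMul cs θ v i ≤ᵇ θ (s i) * v := by
  by_cases h : θ (s i) * v * s i = v
  · have hcomm : θ (s i) * v = v * s i := by
      conv_rhs => rw [← h]
      rw [simple_mul_simple_cancel_right]
    rw [twMul_of_eq h, hcomm]
  · have := length_theta_simple_mul_mul_simple_add_two cs θ hinv hS hv hi h
    have := length_theta_simple_mul cs θ hinv hS hv i
    have := cs.length_mul_simple v i
    rw [twMul_of_ne h]
    exact cs.mul_simple_bruhatLE (by omega)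

theorem lift_twMul_of_bruhatLE_mul_simple (hinv : ∀ w : W, θ (θ w) = w)
    (hS : PreservesSimples cs θ) {u v : W} (hv : θ v = v⁻¹) {i : B} (hu : ℓ u < ℓ (u * s i))
    (hvu : v ≤ᵇ u * s i) : v ≤ᵇ u ∨ (ℓ (v * s i) < ℓ v ∧ twMul cs θ v i ≤ᵇ u) := by
  rcases hvu.lift_right (by rwa [simple_mul_simple_cancel_right]) with h | ⟨hvi, h⟩ <;>
    rw [simple_mul_simple_cancel_right] at h
  · exact Or.inl h
  · exact Or.inr ⟨hvi, (twMul_bruhatLE_mul_simple cs θ hinv hS hv hvi).trans h⟩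

/-- The lifting property for the twisted action. -/
theorem lift_twMul (hinv : ∀ w : W, θ (θ w) = w) (hS : PreservesSimples cs θ) {u v : W}
    (hu : θ u = u⁻¹) (hv : θ v = v⁻¹) {i : B} (hui : ℓ u < ℓ (u * s i))
    (hvu : v ≤ᵇ twMul cs θ u i) : v ≤ᵇ u ∨ (ℓ (v * s i) < ℓ v ∧ twMul cs θ v i ≤ᵇ u) := by
  by_cases hu' : θ (s i) * u * s i = u
  · rw [twMul_of_eq hu'] at hvu
    exact lift_twMul_of_bruhatLE_mul_simple cs θ hinv hS hv hui hvu
  obtain ⟨a, ha⟩ := hS i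
  rw [twMul_of_ne hu'] at hvu
  have hback : θ (s i) * (θ (s i) * u * s i) = u * s i := by
    rw [← mul_assoc, ← mul_assoc, theta_simple_mul_self, one_mul]
  have hdesc : ℓ (s a * (θ (s i) * u * s i)) < ℓ (θ (s i) * u * s i) := by
    rw [← ha, hback, length_theta_simple_mul_mul_simple_eq_add_two cs θ hinv hS hu hui hu']
    have := cs.length_mul_simple u i
    omega
  rcases hvu.lift_left hdesc with h | ⟨hvi, h⟩
  · rw [← ha, hback] at h
    exact lift_twMul_of_bruhatLE_mul_simple cs θ hinv hS hv hui h
  rw [← ha, hback] at h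
  rw [← ha, length_theta_simple_mul cs θ hinv hS hv] at hvi
  rcases h.lift_right (by rwa [simple_mul_simple_cancel_right]) with h' | ⟨-, h'⟩ <;>
    rw [simple_mul_simple_cancel_right] at h'
  · exact Or.inr ⟨hvi, (twMul_bruhatLE_theta_simple_mul cs θ hinv hS hv hvi).trans h'⟩
  · by_cases hv' : θ (s i) * v * s i = v
    · exact Or.inl (hv' ▸ h')
    · exact Or.inr ⟨hvi, by rwa [twMul_of_ne hv']⟩

end TwistedInvolutions

theorem List.Sublist.exists_eq_eraseIdx {α : Type*} {μ l : List α} (h : μ.Sublist l)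
    (hlen : μ.length + 1 = l.length) : ∃ j < l.length, μ = l.eraseIdx j := by
  induction h with
  | slnil => simp at hlen
  | cons a h _ =>
    exact ⟨0, by simp, by simpa using h.eq_of_length (by simpa using hlen)⟩
  | cons_cons a _ ih =>
    obtain ⟨j, hj, rfl⟩ := ih (by simpa using hlen)
    exact ⟨j + 1, by simpa using hj, rfl⟩

section TwistedRank

open CoxeterSystem

variable {B W : Type*} [Group W] {M : CoxeterMatrix B} (cs : CoxeterSystem M W) (θ : W ≃* W)

local prefix:100 "s" => cs.simple
local prefix:100 "ℓ" => cs.length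
local infix:50 " ≤ᵇ " => cs.BruhatLE

theorem twWord_append_singleton (w : W) (l : List B) (i : B) :
    twWord cs θ w (l ++ [i]) = twMul cs θ (twWord cs θ w l) i := by
  simp [twWord]

theorem theta_twWord (hinv : ∀ w : W, θ (θ w) = w) (l : List B) :
    θ (twWord cs θ 1 l) = (twWord cs θ 1 l)⁻¹ := by
  induction l using List.reverseRecOn with
  | nil => simp [twWord]
  | append_singleton l i ih => rw [twWord_append_singleton, theta_twMul cs θ hinv ih]

variable {cs θ}

theorem twRho_le {w : W} {l : List B} (h : twWord cs θ 1 l = w) : twRho cs θ w ≤ l.length :=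
  Nat.sInf_le ⟨l, rfl, h⟩

theorem exists_twWord_length_eq_twRho {w : W} (h : ∃ l, twWord cs θ 1 l = w) :
    ∃ l : List B, l.length = twRho cs θ w ∧ twWord cs θ 1 l = w := by
  obtain ⟨l, hl⟩ := h
  have hne : ∃ k, ∃ l : List B, l.length = k ∧ twWord cs θ 1 l = w := ⟨_, l, rfl, hl⟩
  exact Nat.sInf_mem hne

variable (cs θ)

/-- Also true when `w` is not reached from `1`: then neither is `w · s̲ᵢ`, and both ranks are
the junk value `sInf ∅ = 0`. -/
theorem twRho_twMul_le (w : W) (i : B) : twRho cs θ (twMul cs θ w i) ≤ twRho cs θ w + 1 := by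
  by_cases hw : ∃ l, twWord cs θ 1 l = w
  · obtain ⟨l, hl, rfl⟩ := exists_twWord_length_eq_twRho hw
    simpa [hl] using twRho_le (twWord_append_singleton cs θ 1 l i)
  · have hempty : {k | ∃ l : List B, l.length = k ∧ twWord cs θ 1 l = twMul cs θ w i} = ∅ := by
      refine Set.eq_empty_of_forall_notMem ?_
      rintro k ⟨l, -, hl⟩
      exact hw ⟨l ++ [i], by rw [twWord_append_singleton, hl, twMul_twMul]⟩
    simp [twRho, hempty]

def ExchangeAt (k : ℕ) : Prop :=
  ∀ l : List B, l.length = k → twRho cs θ (twWord cs θ 1 l) = k →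
    ∀ i : B, ℓ (twWord cs θ 1 l * s i) < ℓ (twWord cs θ 1 l) →
      ∃ j < k, twMul cs θ (twWord cs θ 1 l) i = twWord cs θ 1 (l.eraseIdx j)

def SubwordAt (k : ℕ) : Prop :=
  ∀ l : List B, l.length = k → twRho cs θ (twWord cs θ 1 l) = k →
    ∀ v : W, θ v = v⁻¹ → v ≤ᵇ twWord cs θ 1 l →
      ∃ μ : List B, μ.Sublist l ∧ twWord cs θ 1 μ = v ∧ μ.length = twRho cs θ v

variable {cs θ}

theorem twRho_twMul_lt {x : W} (hx : ∃ l, twWord cs θ 1 l = x)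
    (hA : ExchangeAt cs θ (twRho cs θ x)) {i : B} (hi : ℓ (x * s i) < ℓ x) :
    twRho cs θ (twMul cs θ x i) < twRho cs θ x := by
  obtain ⟨l, hl, rfl⟩ := exists_twWord_length_eq_twRho hx
  obtain ⟨j, hj, hxj⟩ := hA l hl rfl i hi
  have := List.length_eraseIdx_add_one (hl ▸ hj)
  have := twRho_le hxj.symm
  omega

theorem twRho_lt_twRho_twMul (hinv : ∀ w : W, θ (θ w) = w) (hS : PreservesSimples cs θ)
    {x : W} (hx : ∃ l, twWord cs θ 1 l = x) {i : B}
    (hA : ExchangeAt cs θ (twRho cs θ (twMul cs θ x i))) (hi : ℓ x < ℓ (x * s i)) :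
    twRho cs θ x < twRho cs θ (twMul cs θ x i) := by
  obtain ⟨l, rfl⟩ := hx
  have hdesc := length_twMul_mul_simple_lt cs θ hinv hS (theta_twWord cs θ hinv l) hi
  simpa [twMul_twMul] using
    twRho_twMul_lt ⟨l ++ [i], twWord_append_singleton cs θ 1 l i⟩ hA hdesc

theorem exchangeAt_of_subwordAt (hinv : ∀ w : W, θ (θ w) = w) (hS : PreservesSimples cs θ)
    {k : ℕ} (hSW : SubwordAt cs θ k) : ExchangeAt cs θ k := by
  intro l hl hred i hi
  have hw := theta_twWord cs θ hinv l
  have hyw : twMul cs θ (twWord cs θ 1 l) i ≤ᵇ twWord cs θ 1 l :=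
    (twMul_bruhatLE_mul_simple cs θ hinv hS hw hi).trans (cs.mul_simple_bruhatLE hi)
  obtain ⟨μ, hμl, hμ, hμlen⟩ := hSW l hl hred _ (theta_twMul cs θ hinv hw i) hyw
  have hne : μ.length ≠ k := fun h =>
    twMul_ne cs θ _ i (by rw [← hμ, hμl.eq_of_length (by omega)])
  have hge : twRho cs θ (twWord cs θ 1 l) ≤ (μ ++ [i]).length :=
    twRho_le (by rw [twWord_append_singleton, hμ, twMul_twMul])
  obtain ⟨j, hj, rfl⟩ := hμl.exists_eq_eraseIdx (by simp at hge; have := hμl.length_le; omega)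
  exact ⟨j, hl ▸ hj, hμ.symm⟩

theorem subwordAt_zero : SubwordAt cs θ 0 := by
  intro l hl _ v _ hv
  obtain rfl := List.length_eq_zero_iff.1 hl
  have hv1 : v = 1 := cs.length_eq_zero_iff.1 (by simpa [twWord] using hv.length_le)
  subst hv1
  exact ⟨[], List.nil_sublist _, rfl, (Nat.le_zero.1 (twRho_le (l := []) rfl)).symm⟩

theorem subwordAt_succ (hinv : ∀ w : W, θ (θ w) = w) (hS : PreservesSimples cs θ) {k : ℕ}
    (hSW : SubwordAt cs θ k) (hA : ∀ m ≤ k, ExchangeAt cs θ m) : SubwordAt cs θ (k + 1) := by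
  intro l hl hred v hv hvw
  obtain ⟨m, t, rfl⟩ := (List.eq_nil_or_concat' l).resolve_left (by rintro rfl; simp at hl)
  have hm : m.length = k := by simpa using hl
  rw [twWord_append_singleton] at hred hvw
  set u := twWord cs θ 1 m
  have hured : twRho cs θ u = k :=
    le_antisymm (hm ▸ twRho_le rfl) (by have := twRho_twMul_le cs θ u t; omega)
  have hut : ℓ u < ℓ (u * s t) := by
    rcases cs.length_mul_simple u t with h | h
    · omega
    · have := twRho_twMul_lt (x := u) ⟨m, rfl⟩ (hured ▸ hA k le_rfl) (by omega : ℓ (u * s t) < ℓ u)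
      omega
  rcases lift_twMul cs θ hinv hS (theta_twWord cs θ hinv m) hv hut hvw with hvu | ⟨hvt, hvtu⟩
  · obtain ⟨μ, hμm, hμ, hμlen⟩ := hSW m hm hured v hv hvu
    exact ⟨μ, hμm.trans (List.sublist_append_left m [t]), hμ, hμlen⟩
  obtain ⟨μ, hμm, hμ, hμlen⟩ := hSW m hm hured _ (theta_twMul cs θ hinv hv t) hvtu
  have hμv : twWord cs θ 1 (μ ++ [t]) = v := by rw [twWord_append_singleton, hμ, twMul_twMul]
  refine ⟨μ ++ [t], hμm.append_right [t], hμv, le_antisymm ?_ (twRho_le hμv)⟩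
  rw [List.length_append, List.length_singleton]
  by_contra! hlt
  have := hμm.length_le
  have := twRho_twMul_lt ⟨_, hμv⟩ (hA _ (by omega)) hvt
  omega

theorem subwordAt (hinv : ∀ w : W, θ (θ w) = w) (hS : PreservesSimples cs θ) (k : ℕ) :
    SubwordAt cs θ k := by
  induction k using Nat.strong_induction_on with
  | _ k ih =>
    cases k with
    | zero => exact subwordAt_zero
    | succ k =>
      exact subwordAt_succ hinv hS (ih k (by omega))
        fun m hm => exchangeAt_of_subwordAt hinv hS (ih m (by omega))

theorem exchangeAt (hinv : ∀ w : W, θ (θ w) = w) (hS : PreservesSimples cs θ) (k : ℕ) :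
    ExchangeAt cs θ k :=
  exchangeAt_of_subwordAt hinv hS (subwordAt hinv hS k)

end TwistedRank

/-- Exchange property for `I(θ)` (Proposition 3.7). -/
theorem stmt_8 {B W : Type*} [Group W] {M : CoxeterMatrix B}
    (cs : CoxeterSystem M W) (θ : W ≃* W)
    (hinv : ∀ w : W, θ (θ w) = w) (hS : PreservesSimples cs θ)
    (l : List B) (hred : twRho cs θ (twWord cs θ 1 l) = l.length)
    (i : B) (h : twRho cs θ (twWord cs θ 1 (l ++ [i])) < l.length) :
    ∃ j < l.length, twWord cs θ 1 (l ++ [i]) = twWord cs θ 1 (l.eraseIdx j) := by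
  rw [twWord_append_singleton] at h ⊢
  have hdesc : cs.length (twWord cs θ 1 l * cs.simple i) < cs.length (twWord cs θ 1 l) := by
    by_contra! hasc
    have := twRho_lt_twRho_twMul hinv hS ⟨l, rfl⟩ (exchangeAt hinv hS _)
      (hasc.lt_of_ne (cs.length_mul_simple_ne _ i).symm)
    omega
  exact exchangeAt hinv hS _ l rfl hred i hdesc
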